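/- Cycle Bias Lemma: Under (UG), (BV), L-smoothness of F, L_i-smoothness of each F_i, and bounded heterogeneity, if γ_max ≤ 1/(2 K L ρ), then the cycle biases satisfy Σ_{m=0}^{M−1} E[‖b_m‖²] ≤ 2 A² K² L_max² M (σ² + ζ²) + 4 A² K² L_max² ρ² Σ_{m=0}^{M−1} E[‖∇F(x^m)‖²]. -/

import Mathlib

/-!
Let `D t = E‖y t - x^⌊t/K⌋‖²` measure how far the model used at step `t` is from the start of
its cycle. By Cauchy–Schwarz and `Lmax`-smoothness, `E‖b_m‖² ≤ A Lmax² ∑ D t` over the steps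
of cycle `m`. The stale model and the cycle start are both among the last `K` server
iterates, so `D t ≤ K ∑ γ² E‖g v‖²` over the `K` updates preceding `t`, and in the sum over `t`
each update is counted at most `K` times. By unbiasedness the oracle noise is orthogonal in
`L²` to the local gradient at the stale model, whence
`E‖g v‖² ≤ σ² + ζ² + 2ρ² E‖∇F(x^⌊v/K⌋)‖² + 2ρ²L² D v`; the step-size condition makes the
resulting `D` terms at most half of `∑ D t`, so they are absorbed.
-/

open MeasureTheory Finset
open scoped RealInnerProductSpace NNReal

theorem Finset.sum_range_mul_eq_sum_sum {M : Type*} [AddCommMonoid M] (f : ℕ → M) (N K : ℕ) :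
    ∑ t ∈ range (N * K), f t = ∑ m ∈ range N, ∑ k ∈ range K, f (m * K + k) := by
  induction N with
  | zero => simp
  | succ N ih => rw [Nat.succ_mul, sum_range_add, ih, sum_range_succ]

theorem Finset.sum_range_mul_eq_sum_sum_div {M : Type*} [AddCommMonoid M] (f : ℕ → ℕ → M)
    (N K : ℕ) :
    ∑ t ∈ range (N * K), f (t / K) t = ∑ m ∈ range N, ∑ k ∈ range K, f m (m * K + k) := by
  rw [sum_range_mul_eq_sum_sum]
  refine sum_congr rfl fun m _ => sum_congr rfl fun k hk => ?_
  have hk : k < K := mem_range.1 hk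
  rw [add_comm, Nat.add_mul_div_right _ _ (by omega), Nat.div_eq_of_lt hk, zero_add]

theorem Function.Periodic.sum_range_mul_mul_div {R : Type*} [CommSemiring R] {a : ℕ → R}
    {K : ℕ} (ha : Function.Periodic a K) (φ : ℕ → R) (N : ℕ) :
    ∑ t ∈ range (N * K), a t * φ (t / K) = (∑ k ∈ range K, a k) * ∑ m ∈ range N, φ m := by
  rw [sum_range_mul_eq_sum_sum_div (fun m t => a t * φ m), mul_comm, sum_mul]
  refine sum_congr rfl fun m _ => ?_
  rw [mul_sum]
  refine sum_congr rfl fun k _ => ?_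
  rw [add_comm, (by exact_mod_cast ha.nat_mul m : Function.Periodic a (m * K)) k, mul_comm]

theorem Finset.sum_range_sum_Ico_sub_le {f : ℕ → ℝ} (hf : ∀ v, 0 ≤ f v) (K N : ℕ) :
    ∑ t ∈ range N, ∑ v ∈ Ico (t - K) t, f v ≤ K * ∑ v ∈ range N, f v := by
  rw [sum_comm' (t' := range N) (s' := fun v => (range N).filter fun t => t - K ≤ v ∧ v < t)
    (fun t v => by simp only [mem_range, mem_Ico, mem_filter]; omega), mul_sum]
  refine sum_le_sum fun v _ => ?_
  rw [sum_const, nsmul_eq_mul]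
  have hsub : (range N).filter (fun t => t - K ≤ v ∧ v < t) ⊆ Ioc v (v + K) := fun t ht => by
    simp only [mem_filter, mem_range, mem_Ioc] at ht ⊢; omega
  have hcard : #((range N).filter fun t => t - K ≤ v ∧ v < t) ≤ K := by
    have := card_le_card hsub
    rw [Nat.card_Ioc] at this
    omega
  exact mul_le_mul_of_nonneg_right (by exact_mod_cast hcard) (hf v)

theorem Finset.sum_le_two_mul_sum_of_le_add_half {ι : Type*} {s : Finset ι} {D b c : ι → ℝ}
    (hD : ∀ i ∈ s, 0 ≤ D i) (hc : ∀ i ∈ s, c i ≤ 1 / 2)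
    (h : ∑ i ∈ s, D i ≤ ∑ i ∈ s, (b i + c i * D i)) :
    ∑ i ∈ s, D i ≤ 2 * ∑ i ∈ s, b i := by
  have hhalf : ∑ i ∈ s, c i * D i ≤ ∑ i ∈ s, D i / 2 :=
    sum_le_sum fun i hi => by nlinarith [hc i hi, hD i hi]
  rw [sum_add_distrib] at h
  rw [← sum_div] at hhalf
  linarith

section Schedule

variable {α β : Type*}

theorem exists_recent_eq_of_periodic {ι : ℕ → α} {K : ℕ} (hK : 0 < K)
    (hper : ∀ t, ι (t + K) = ι t) {y z : ℕ → β}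
    (hy0 : ∀ t, (∀ s < t, ι s ≠ ι t) → y t = z 0)
    (hyprev : ∀ s t, s < t → ι s = ι t → (∀ u, s < u → u < t → ι u ≠ ι t) → y t = z (s + 1))
    (t : ℕ) : ∃ u ≤ t, t < u + K ∧ y t = z u := by
  classical
  have hback (h : K ≤ t) : ι (t - K) = ι t := by
    simpa [Nat.sub_add_cancel h] using (hper (t - K)).symm
  by_cases hS : ∃ s < t, ι s = ι t
  · obtain ⟨s₀, hs₀t, hs₀⟩ := hS
    set s := Nat.findGreatest (fun s => s < t ∧ ι s = ι t) t
    have hs : s < t ∧ ι s = ι t :=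
      Nat.findGreatest_spec (P := fun s => s < t ∧ ι s = ι t) hs₀t.le ⟨hs₀t, hs₀⟩
    have hlast : ∀ u, s < u → u < t → ι u ≠ ι t := fun u hsu hut hu =>
      Nat.findGreatest_is_greatest hsu hut.le ⟨hut, hu⟩
    refine ⟨s + 1, hs.1, ?_, hyprev s t hs.1 hs.2 hlast⟩
    by_contra! h
    exact hlast (t - K) (by omega) (by omega) (hback (by omega))
  · simp only [not_exists, not_and] at hS
    refine ⟨0, t.zero_le, ?_, hy0 t hS⟩
    by_contra! h
    exact hS (t - K) (by omega) (hback (by omega))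

end Schedule

section Telescoping

variable {E : Type*} [SeminormedAddCommGroup E] {z w : ℕ → E}

theorem sub_eq_sum_Ico_of_succ_eq_sub (hz : ∀ t, z (t + 1) = z t - w t) {a b : ℕ}
    (hab : a ≤ b) : z a - z b = ∑ v ∈ Ico a b, w v := by
  rw [← neg_sub, ← sum_Ico_sub z hab, ← sum_neg_distrib]
  exact sum_congr rfl fun v _ => by rw [hz]; abel

theorem norm_sub_sq_le_card_mul_sum_of_succ_eq_sub (hz : ∀ t, z (t + 1) = z t - w t)
    {a b : ℕ} (hab : a ≤ b) : ‖z a - z b‖ ^ 2 ≤ (b - a : ℕ) * ∑ v ∈ Ico a b, ‖w v‖ ^ 2 := by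
  rw [sub_eq_sum_Ico_of_succ_eq_sub hz hab, ← Nat.card_Ico]
  calc ‖∑ v ∈ Ico a b, w v‖ ^ 2 ≤ (∑ v ∈ Ico a b, ‖w v‖) ^ 2 := by
        gcongr; exact norm_sum_le _ _
    _ ≤ _ := sq_sum_le_card_mul_sum_sq

theorem norm_sub_sq_le_mul_sum_window_of_succ_eq_sub (hz : ∀ t, z (t + 1) = z t - w t)
    {K t a b : ℕ} (ha : a ≤ t) (ha' : t < a + K) (hb : b ≤ t) (hb' : t < b + K) :
    ‖z a - z b‖ ^ 2 ≤ K * ∑ v ∈ Ico (t - K) t, ‖w v‖ ^ 2 := by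
  wlog hab : a ≤ b generalizing a b
  · rw [norm_sub_rev]; exact this hb hb' ha ha' (by omega)
  refine (norm_sub_sq_le_card_mul_sum_of_succ_eq_sub hz hab).trans
    (mul_le_mul (by exact_mod_cast (by omega : b - a ≤ K)) ?_ (by positivity) (by positivity))
  exact sum_le_sum_of_subset_of_nonneg (Ico_subset_Ico (by omega) hb) fun _ _ _ => by positivity

end Telescoping

theorem LipschitzWith.norm_sq_le {E F : Type*} [SeminormedAddCommGroup E]
    [SeminormedAddCommGroup F] {G : E → F} {C : ℝ≥0} (hG : LipschitzWith C G) (x x' : E) :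
    ‖G x‖ ^ 2 ≤ 2 * ‖G x'‖ ^ 2 + 2 * C ^ 2 * ‖x - x'‖ ^ 2 := by
  have h₁ := norm_le_insert' (G x) (G x')
  have h₂ := hG.norm_sub_le x x'
  nlinarith [norm_nonneg (G x), sq_nonneg (‖G x'‖ - C * ‖x - x'‖)]

theorem norm_sum_smul_sq_le {κ F : Type*} [SeminormedAddCommGroup F] [NormedSpace ℝ F]
    (s : Finset κ) (γ : κ → ℝ) (v : κ → F) :
    ‖∑ k ∈ s, γ k • v k‖ ^ 2 ≤ (∑ k ∈ s, γ k ^ 2) * ∑ k ∈ s, ‖v k‖ ^ 2 := by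
  calc ‖∑ k ∈ s, γ k • v k‖ ^ 2 ≤ (∑ k ∈ s, |γ k| * ‖v k‖) ^ 2 := by
        gcongr
        exact (norm_sum_le _ _).trans_eq (by simp only [norm_smul, Real.norm_eq_abs])
    _ ≤ _ := by simpa only [sq_abs] using sum_mul_sq_le_sq_mul_sq s (fun k => |γ k|) (‖v ·‖)

namespace MeasureTheory

variable {Ω E F : Type*} {m m0 : MeasurableSpace Ω} {μ : Measure Ω}

theorem integral_le_of_condExp_le (hm : m ≤ m0) [IsProbabilityMeasure μ] {f : Ω → ℝ} {c : ℝ}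
    (hfc : μ[f|m] ≤ᵐ[μ] fun _ => c) : ∫ ω, f ω ∂μ ≤ c := by
  rw [← integral_condExp hm]
  simpa using integral_mono_ae integrable_condExp (integrable_const c) hfc

section Normed

variable [NormedAddCommGroup E] [NormedAddCommGroup F]

theorem _root_.LipschitzWith.memLp_comp [IsFiniteMeasure μ] {G : E → F} {C : ℝ≥0}
    (hG : LipschitzWith C G) {p : ENNReal} {w : Ω → E} (hw : MemLp w p μ) :
    MemLp (fun ω => G (w ω)) p μ := by
  refine ((memLp_const ‖G 0‖).add (hw.norm.const_mul C)).of_le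
    (hG.continuous.comp_aestronglyMeasurable hw.1) (Filter.Eventually.of_forall fun ω => ?_)
  have h₁ := norm_le_insert' (G (w ω)) (G 0)
  have h₂ := hG.norm_sub_le (w ω) 0
  rw [sub_zero] at h₂
  rw [Pi.add_apply, Real.norm_of_nonneg (by positivity)]
  linarith

theorem integral_norm_sum_smul_sub_sq_le [NormedSpace ℝ F] [IsFiniteMeasure μ] {κ : Type*}
    (s : Finset κ) (γ : κ → ℝ) {G : κ → E → F} {C : ℝ}
    (hG : ∀ k ∈ s, ∀ u v, ‖G k u - G k v‖ ≤ C * ‖u - v‖) {a : κ → Ω → E} {b : Ω → E}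
    (ha : ∀ k, MemLp (a k) 2 μ) (hb : MemLp b 2 μ) :
    ∫ ω, ‖∑ k ∈ s, γ k • (G k (a k ω) - G k (b ω))‖ ^ 2 ∂μ ≤
      (∑ k ∈ s, γ k ^ 2) * C ^ 2 * ∑ k ∈ s, ∫ ω, ‖a k ω - b ω‖ ^ 2 ∂μ := by
  have hab : ∀ k, Integrable (fun ω => ‖a k ω - b ω‖ ^ 2) μ :=
    fun k => ((ha k).sub hb).norm.integrable_sq
  have hpt : ∀ ω, ‖∑ k ∈ s, γ k • (G k (a k ω) - G k (b ω))‖ ^ 2 ≤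
      (∑ k ∈ s, γ k ^ 2) * ∑ k ∈ s, C ^ 2 * ‖a k ω - b ω‖ ^ 2 := fun ω => by
    refine (norm_sum_smul_sq_le s γ _).trans ?_
    gcongr with k hk
    rw [← mul_pow]
    exact pow_le_pow_left₀ (norm_nonneg _) (hG k hk _ _) 2
  calc _ ≤ ∫ ω, (∑ k ∈ s, γ k ^ 2) * ∑ k ∈ s, C ^ 2 * ‖a k ω - b ω‖ ^ 2 ∂μ :=
        integral_mono_of_nonneg (ae_of_all _ fun ω => by positivity)
          ((integrable_finsetSum _ fun k _ => (hab k).const_mul _).const_mul _) (ae_of_all _ hpt)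
    _ = _ := by
        rw [integral_const_mul, integral_finsetSum _ fun k _ => (hab k).const_mul _]
        simp_rw [integral_const_mul]
        rw [← mul_sum, mul_assoc]

theorem memLp_of_succ_eq_sub_smul [NormedSpace ℝ E] {p : ENNReal} {z g : ℕ → Ω → E}
    {η : ℕ → ℝ} (h0 : MemLp (z 0) p μ) (hz : ∀ t ω, z (t + 1) ω = z t ω - η t • g t ω)
    (hg : ∀ t, MemLp (g t) p μ) (t : ℕ) : MemLp (z t) p μ := by
  induction t with
  | zero => exact h0
  | succ t ih => exact (funext (hz t)).symm ▸ ih.sub ((hg t).const_smul (η t))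

end Normed

section Hilbert

variable [NormedAddCommGroup E] [InnerProductSpace ℝ E]

theorem MemLp.integrable_inner {f h : Ω → E} (hf : MemLp f 2 μ) (hh : MemLp h 2 μ) :
    Integrable (fun ω => ⟪f ω, h ω⟫) μ :=
  (hf.norm.integrable_mul hh.norm).mono' (hf.1.inner hh.1)
    (Filter.Eventually.of_forall fun ω => by
      simpa using norm_inner_le_norm (𝕜 := ℝ) (f ω) (h ω))

variable [CompleteSpace E]

theorem integral_norm_sq_eq_add_of_condExp_ae_eq (hm : m ≤ m0) [IsFiniteMeasure μ]
    {f h : Ω → E} (hf : MemLp f 2 μ) (hh : MemLp h 2 μ) (hhm : StronglyMeasurable[m] h)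
    (hfh : μ[f|m] =ᵐ[μ] h) :
    ∫ ω, ‖f ω‖ ^ 2 ∂μ = ∫ ω, ‖f ω - h ω‖ ^ 2 ∂μ + ∫ ω, ‖h ω‖ ^ 2 ∂μ := by
  have hpull : μ[fun ω => ⟪h ω, f ω⟫|m] =ᵐ[μ] fun ω => ‖h ω‖ ^ 2 := by
    filter_upwards [condExp_bilin_of_stronglyMeasurable_left (innerSL ℝ : E →L[ℝ] E →L[ℝ] ℝ)
      hhm (hh.integrable_inner hf) (hf.integrable one_le_two), hfh] with ω hpullω hω
    rw [hω] at hpullω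
    exact hpullω.trans (real_inner_self_eq_norm_sq (h ω))
  have hcross : ∫ ω, ⟪h ω, f ω⟫ ∂μ = ∫ ω, ‖h ω‖ ^ 2 ∂μ := by
    rw [← integral_condExp hm, integral_congr_ae hpull]
  have hexpand : ∀ ω, ‖f ω - h ω‖ ^ 2 = ‖f ω‖ ^ 2 - 2 * ⟪h ω, f ω⟫ + ‖h ω‖ ^ 2 := fun ω => by
    rw [norm_sub_sq_real, real_inner_comm]
  have hf2 : Integrable (fun ω => ‖f ω‖ ^ 2) μ := hf.norm.integrable_sq
  have hh2 : Integrable (fun ω => ‖h ω‖ ^ 2) μ := hh.norm.integrable_sq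
  have hhf : Integrable (fun ω => 2 * ⟪h ω, f ω⟫) μ := (hh.integrable_inner hf).const_mul 2
  simp_rw [hexpand]
  rw [integral_add (f := fun ω => ‖f ω‖ ^ 2 - 2 * ⟪h ω, f ω⟫) (hf2.sub hhf) hh2,
    integral_sub hf2 hhf, integral_const_mul, hcross]
  ring

theorem integral_norm_sq_le_of_condExp_ae_eq (hm : m ≤ m0) [IsProbabilityMeasure μ]
    {Gi G : E → E} {Ci C : ℝ≥0} (hGi : LipschitzWith Ci Gi) (hG : LipschitzWith C G)
    {σ ζ ρ : ℝ} (hhet : ∀ x, ‖Gi x‖ ^ 2 ≤ ζ ^ 2 + ρ ^ 2 * ‖G x‖ ^ 2)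
    {g y x : Ω → E} (hg : MemLp g 2 μ) (hy : MemLp y 2 μ) (hx : MemLp x 2 μ)
    (hym : StronglyMeasurable[m] y) (hUG : μ[g|m] =ᵐ[μ] fun ω => Gi (y ω))
    (hBV : μ[fun ω => ‖g ω - Gi (y ω)‖ ^ 2|m] ≤ᵐ[μ] fun _ => σ ^ 2) :
    ∫ ω, ‖g ω‖ ^ 2 ∂μ ≤ σ ^ 2 + ζ ^ 2 + 2 * ρ ^ 2 * ∫ ω, ‖G (x ω)‖ ^ 2 ∂μ
      + 2 * ρ ^ 2 * C ^ 2 * ∫ ω, ‖y ω - x ω‖ ^ 2 ∂μ := by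
  rw [integral_norm_sq_eq_add_of_condExp_ae_eq hm hg (hGi.memLp_comp hy)
    (hGi.continuous.comp_stronglyMeasurable hym) hUG]
  have hnoise := integral_le_of_condExp_le hm hBV
  have hGx : Integrable (fun ω => 2 * ρ ^ 2 * ‖G (x ω)‖ ^ 2) μ :=
    (hG.memLp_comp hx).norm.integrable_sq.const_mul _
  have hyx : Integrable (fun ω => 2 * ρ ^ 2 * C ^ 2 * ‖y ω - x ω‖ ^ 2) μ :=
    (hy.sub hx).norm.integrable_sq.const_mul _
  have hGyx : Integrable (fun ω => 2 * ρ ^ 2 * ‖G (x ω)‖ ^ 2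
      + 2 * ρ ^ 2 * C ^ 2 * ‖y ω - x ω‖ ^ 2) μ := hGx.add hyx
  have hdrift : ∫ ω, ‖Gi (y ω)‖ ^ 2 ∂μ ≤ ∫ ω, (ζ ^ 2 + (2 * ρ ^ 2 * ‖G (x ω)‖ ^ 2
      + 2 * ρ ^ 2 * C ^ 2 * ‖y ω - x ω‖ ^ 2)) ∂μ := by
    refine integral_mono_of_nonneg (ae_of_all _ fun ω => by positivity)
      ((integrable_const _).add hGyx) (ae_of_all _ fun ω => ?_)
    have := mul_le_mul_of_nonneg_left (hG.norm_sq_le (y ω) (x ω)) (sq_nonneg ρ)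
    linarith [hhet (y ω)]
  rw [integral_add (integrable_const _) hGyx, integral_add hGx hyx, integral_const_mul,
    integral_const_mul, integral_const, probReal_univ, one_smul] at hdrift
  linarith

theorem sum_integral_norm_stale_sub_sq_le [IsProbabilityMeasure μ] {K : ℕ} (hK : 0 < K)
    {ℱ : ℕ → MeasurableSpace Ω} (hℱ : ∀ t, ℱ t ≤ m0) {η : ℕ → ℝ} (hη : ∀ t, 0 ≤ η t)
    {g y z : ℕ → Ω → E} (hz : ∀ t ω, z (t + 1) ω = z t ω - η t • g t ω)
    (hyz : ∀ t, ∃ u ≤ t, t < u + K ∧ y t = z u)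
    (hg : ∀ t, MemLp (g t) 2 μ) (hz2 : ∀ t, MemLp (z t) 2 μ)
    (hym : ∀ t, StronglyMeasurable[ℱ t] (y t))
    {G : ℕ → E → E} {C : ℕ → ℝ≥0} (hG : ∀ t, LipschitzWith (C t) (G t))
    {gradF : E → E} {L : ℝ≥0} (hF : LipschitzWith L gradF) {σ ζ ρ : ℝ} (hρ : 0 ≤ ρ)
    (hUG : ∀ t, μ[g t|ℱ t] =ᵐ[μ] fun ω => G t (y t ω))
    (hBV : ∀ t, μ[fun ω => ‖g t ω - G t (y t ω)‖ ^ 2|ℱ t] ≤ᵐ[μ] fun _ => σ ^ 2)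
    (hhet : ∀ t x, ‖G t x‖ ^ 2 ≤ ζ ^ 2 + ρ ^ 2 * ‖gradF x‖ ^ 2)
    (hstep : ∀ t, 2 * K * L * ρ * η t ≤ 1) (N : ℕ) :
    ∑ t ∈ range N, ∫ ω, ‖y t ω - z (t / K * K) ω‖ ^ 2 ∂μ ≤
      2 * K ^ 2 * ∑ t ∈ range N,
        η t ^ 2 * (σ ^ 2 + ζ ^ 2 + 2 * ρ ^ 2 * ∫ ω, ‖gradF (z (t / K * K) ω)‖ ^ 2 ∂μ) := by
  set D : ℕ → ℝ := fun t => ∫ ω, ‖y t ω - z (t / K * K) ω‖ ^ 2 ∂μ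
  have hy2 (t : ℕ) : MemLp (y t) 2 μ := by
    obtain ⟨u, -, -, hu⟩ := hyz t
    exact hu ▸ hz2 u
  have hwindow (t : ℕ) : D t ≤ K * ∑ v ∈ Ico (t - K) t, η v ^ 2 * ∫ ω, ‖g v ω‖ ^ 2 ∂μ := by
    obtain ⟨u, hut, htu, hyu⟩ := hyz t
    have hg2 (v : ℕ) : Integrable (fun ω => η v ^ 2 * ‖g v ω‖ ^ 2) μ :=
      (hg v).norm.integrable_sq.const_mul _
    have hpt (ω : Ω) : ‖y t ω - z (t / K * K) ω‖ ^ 2 ≤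
        K * ∑ v ∈ Ico (t - K) t, η v ^ 2 * ‖g v ω‖ ^ 2 := by
      simpa only [hyu, norm_smul, mul_pow, Real.norm_eq_abs, sq_abs] using
        norm_sub_sq_le_mul_sum_window_of_succ_eq_sub (z := (z · ω)) (w := fun v => η v • g v ω)
          (hz · ω) hut htu (Nat.div_mul_le_self t K) (Nat.lt_div_mul_add hK)
    calc D t ≤ ∫ ω, K * ∑ v ∈ Ico (t - K) t, η v ^ 2 * ‖g v ω‖ ^ 2 ∂μ :=
          integral_mono_of_nonneg (ae_of_all _ fun ω => by positivity)
            ((integrable_finsetSum _ fun v _ => hg2 v).const_mul _) (ae_of_all _ hpt)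
      _ = _ := by
          rw [integral_const_mul, integral_finsetSum _ fun v _ => hg2 v]
          simp_rw [integral_const_mul]
  have hmoment (t : ℕ) : ∫ ω, ‖g t ω‖ ^ 2 ∂μ ≤ σ ^ 2 + ζ ^ 2
      + 2 * ρ ^ 2 * ∫ ω, ‖gradF (z (t / K * K) ω)‖ ^ 2 ∂μ + 2 * ρ ^ 2 * L ^ 2 * D t :=
    integral_norm_sq_le_of_condExp_ae_eq (hℱ t) (hG t) hF (hhet t) (hg t) (hy2 t) (hz2 _)
      (hym t) (hUG t) (hBV t)
  have habsorb (t : ℕ) : K ^ 2 * (2 * ρ ^ 2 * L ^ 2 * η t ^ 2) ≤ 1 / 2 := by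
    have h0 : 0 ≤ 2 * K * L * ρ * η t := by have := hη t; positivity
    nlinarith [hstep t]
  rw [mul_assoc, mul_sum]
  refine sum_le_two_mul_sum_of_le_add_half (c := fun t => K ^ 2 * (2 * ρ ^ 2 * L ^ 2 * η t ^ 2))
    (fun t _ => integral_nonneg fun ω => by positivity) (fun t _ => habsorb t) ?_
  calc ∑ t ∈ range N, D t
      ≤ ∑ t ∈ range N, K * ∑ v ∈ Ico (t - K) t, η v ^ 2 * ∫ ω, ‖g v ω‖ ^ 2 ∂μ :=
        sum_le_sum fun t _ => hwindow t
    _ ≤ K * (K * ∑ t ∈ range N, η t ^ 2 * ∫ ω, ‖g t ω‖ ^ 2 ∂μ) := by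
        rw [← mul_sum]
        gcongr
        exact sum_range_sum_Ico_sub_le (fun v => by positivity) K N
    _ ≤ K * (K * ∑ t ∈ range N, η t ^ 2 * (σ ^ 2 + ζ ^ 2
          + 2 * ρ ^ 2 * ∫ ω, ‖gradF (z (t / K * K) ω)‖ ^ 2 ∂μ + 2 * ρ ^ 2 * L ^ 2 * D t)) := by
        gcongr with t
        exact hmoment t
    _ = _ := by
        rw [← mul_assoc, mul_sum]
        exact sum_congr rfl fun t _ => by ring

end Hilbert

end MeasureTheory

theorem cycle_bias_lemma_general
    {d n : ℕ}
    {Ω : Type} {m0 : MeasurableSpace Ω} (μ : Measure Ω) [IsProbabilityMeasure μ]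
    (Floc : Fin n → EuclideanSpace ℝ (Fin d) → ℝ)
    (F : EuclideanSpace ℝ (Fin d) → ℝ)
    (K : ℕ)
    (ι : ℕ → Fin n) (hιper : ∀ t, ι (t + K) = ι t)
    (γ : Fin n → ℝ) (hγpos : ∀ i, 0 < γ i)
    (ℱ : ℕ → MeasurableSpace Ω) (hℱle : ∀ t, ℱ t ≤ m0)
    (g y z : ℕ → Ω → EuclideanSpace ℝ (Fin d))
    (x0 : EuclideanSpace ℝ (Fin d)) (hz0 : ∀ ω, z 0 ω = x0)
    (hzrec : ∀ t ω, z (t + 1) ω = z t ω - γ (ι t) • g t ω)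
    (hy0 : ∀ t, (∀ s < t, ι s ≠ ι t) → y t = z 0)
    (hyprev : ∀ s t, s < t → ι s = ι t → (∀ u, s < u → u < t → ι u ≠ ι t) →
        y t = z (s + 1))
    (hg2 : ∀ t, MemLp (g t) 2 μ)
    (hymeas : ∀ t, StronglyMeasurable[ℱ t] (y t))
    (σ : ℝ)
    (hUG : ∀ t, μ[g t | ℱ t] =ᵐ[μ] fun ω => gradient (Floc (ι t)) (y t ω))
    (hBV : ∀ t, μ[(fun ω => ‖g t ω - gradient (Floc (ι t)) (y t ω)‖ ^ 2) | ℱ t]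
        ≤ᵐ[μ] fun _ => σ ^ 2)
    (L : ℝ)
    (hL : ∀ x x', ‖gradient F x - gradient F x'‖ ≤ L * ‖x - x'‖)
    (Li : Fin n → ℝ)
    (hLi : ∀ i x x', ‖gradient (Floc i) x - gradient (Floc i) x'‖ ≤ Li i * ‖x - x'‖)
    (Lmax : ℝ) (hLmax : IsGreatest (Set.range Li) Lmax)
    (ζ ρ : ℝ) (hρ : 0 ≤ ρ)
    (hhet : ∀ i x, ‖gradient (Floc i) x‖ ^ 2 ≤ ζ ^ 2 + ρ ^ 2 * ‖gradient F x‖ ^ 2)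
    (hγmax : ∀ i, 2 * (K : ℝ) * L * ρ * γ i ≤ 1)
    (M : ℕ) :
    ∑ m ∈ Finset.range M, ∫ ω, ‖∑ k ∈ Finset.range K,
        γ (ι k) • (gradient (Floc (ι k)) (y (m * K + k) ω) -
          gradient (Floc (ι k)) (z (m * K) ω))‖ ^ 2 ∂μ
      ≤ 2 * (∑ k ∈ Finset.range K, γ (ι k) ^ 2) ^ 2 * (K : ℝ) ^ 2 * Lmax ^ 2 * M *
          (σ ^ 2 + ζ ^ 2)
        + 4 * (∑ k ∈ Finset.range K, γ (ι k) ^ 2) ^ 2 * (K : ℝ) ^ 2 * Lmax ^ 2 * ρ ^ 2 *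
            ∑ m ∈ Finset.range M, ∫ ω, ‖gradient F (z (m * K) ω)‖ ^ 2 ∂μ := by
  rcases Nat.eq_zero_or_pos K with rfl | hK
  · simp
  have hlip {G : EuclideanSpace ℝ (Fin d) → EuclideanSpace ℝ (Fin d)} {C : ℝ}
      (h : ∀ x x', ‖G x - G x'‖ ≤ C * ‖x - x'‖) : LipschitzWith C.toNNReal G :=
    LipschitzWith.of_dist_le' fun x x' => by simpa only [dist_eq_norm] using h x x'
  have hz2 := memLp_of_succ_eq_sub_smul ((funext hz0).symm ▸ memLp_const x0) hzrec hg2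
  have hyz := exists_recent_eq_of_periodic hK hιper hy0 hyprev
  have hy2 (t : ℕ) : MemLp (y t) 2 μ := by
    obtain ⟨u, -, -, hu⟩ := hyz t
    exact hu ▸ hz2 u
  -- `hL` allows `L < 0` when `d = 0`; `L.toNNReal` is a Lipschitz constant in every case.
  have hstep (t : ℕ) : 2 * K * L.toNNReal * ρ * γ (ι t) ≤ 1 := by
    rcases le_total L 0 with hL0 | hL0
    · simp [Real.toNNReal_of_nonpos hL0]
    · simpa [Real.coe_toNNReal _ hL0] using hγmax (ι t)
  have hdisp := sum_integral_norm_stale_sub_sq_le hK hℱle (fun t => (hγpos (ι t)).le) hzrec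
    hyz hg2 hz2 hymeas (fun t => hlip (hLi (ι t))) (hlip hL) hρ hUG hBV (fun t => hhet (ι t))
    hstep (M * K)
  have hbias (m : ℕ) := integral_norm_sum_smul_sub_sq_le (μ := μ) (range K) (fun k => γ (ι k))
    (G := fun k => gradient (Floc (ι k))) (C := Lmax)
    (fun k _ u v => (hLi _ u v).trans (by gcongr; exact hLmax.2 ⟨_, rfl⟩))
    (fun k => hy2 (m * K + k)) (hz2 (m * K))
  have hper : Function.Periodic (fun t => γ (ι t) ^ 2) K := fun t => by simp only [hιper]
  calc _ ≤ ∑ m ∈ range M, (∑ k ∈ range K, γ (ι k) ^ 2) * Lmax ^ 2 *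
        ∑ k ∈ range K, ∫ ω, ‖y (m * K + k) ω - z (m * K) ω‖ ^ 2 ∂μ := sum_le_sum fun m _ => hbias m
    _ = (∑ k ∈ range K, γ (ι k) ^ 2) * Lmax ^ 2 *
        ∑ t ∈ range (M * K), ∫ ω, ‖y t ω - z (t / K * K) ω‖ ^ 2 ∂μ := by
      rw [← mul_sum, sum_range_mul_eq_sum_sum_div (fun m t => ∫ ω, ‖y t ω - z (m * K) ω‖ ^ 2 ∂μ)]
    _ ≤ _ := mul_le_mul_of_nonneg_left hdisp (by positivity)
    _ = _ := by
      rw [hper.sum_range_mul_mul_div (fun m => σ ^ 2 + ζ ^ 2 +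
        2 * ρ ^ 2 * ∫ ω, ‖gradient F (z (m * K) ω)‖ ^ 2 ∂μ)]
      simp only [sum_add_distrib, sum_const, card_range, nsmul_eq_mul, ← mul_sum]
      ring

/-- **Cycle Bias Lemma.**
Asynchronous SGD with cyclic update schedule (flattened iteration index `t = m*K + k`):
`n` workers with computation times `τ i > 0` satisfying the harmonic-periods condition,
worker `i` delivering `Ki i = τmax / τ i` gradients per cycle of `K` inner iterations
following the (K-periodic) schedule `ι`; the server updates `z (t+1) = z t − γ (ι t) • g t`
from `z 0 = x⁰`; the stale model `y t` is the server iterate seen by worker `ι t` at its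
previous delivery (an earlier server iterate at most `K` updates in the past).  Under (UG),
(BV), `L`-smoothness of `F = (1/n) ∑ i, F i`, `Li i`-smoothness of each `F i` with
`Lmax = max_i Li i`, bounded heterogeneity, and `γmax ≤ 1/(2 K L ρ)`, the cycle biases
`b_m = ∑_{k<K} γ_{i_k} (∇F_{i_k}(y_{k,i_k}^m) − ∇F_{i_k}(x^m))` satisfy
`∑_{m<M} E[‖b_m‖²] ≤ 2 A² K² Lmax² M (σ² + ζ²)
  + 4 A² K² Lmax² ρ² ∑_{m<M} E[‖∇F(x^m)‖²]` with `A = ∑_{k<K} γ_{i_k}²`. -/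
theorem cycle_bias_lemma
    {d n : ℕ} (hn : 0 < n)
    {Ω : Type} {m0 : MeasurableSpace Ω} (μ : Measure Ω) [IsProbabilityMeasure μ]
    (Floc : Fin n → EuclideanSpace ℝ (Fin d) → ℝ)
    (hdiff : ∀ i, Differentiable ℝ (Floc i))
    (F : EuclideanSpace ℝ (Fin d) → ℝ)
    (hF : ∀ x, F x = (1 / (n : ℝ)) * ∑ i, Floc i x)
    (τ : Fin n → ℝ) (hτpos : ∀ i, 0 < τ i)
    (hharm : ∀ i j, (∃ q : ℕ, τ i = (q : ℝ) * τ j) ∨ (∃ q : ℕ, τ j = (q : ℝ) * τ i))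
    (τmax : ℝ) (hτmax : IsGreatest (Set.range τ) τmax)
    (Ki : Fin n → ℕ) (hKi : ∀ i, (Ki i : ℝ) = τmax / τ i)
    (K : ℕ) (hK : K = ∑ i, Ki i)
    (ι : ℕ → Fin n) (hιper : ∀ t, ι (t + K) = ι t)
    (hιcount : ∀ i, ((Finset.range K).filter fun k => ι k = i).card = Ki i)
    (γ : Fin n → ℝ) (hγpos : ∀ i, 0 < γ i)
    (ℱ : ℕ → MeasurableSpace Ω) (hℱmono : Monotone ℱ) (hℱle : ∀ t, ℱ t ≤ m0)
    (g y z : ℕ → Ω → EuclideanSpace ℝ (Fin d))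
    (x0 : EuclideanSpace ℝ (Fin d)) (hz0 : ∀ ω, z 0 ω = x0)
    (hzrec : ∀ t ω, z (t + 1) ω = z t ω - γ (ι t) • g t ω)
    (hy0 : ∀ t, (∀ s < t, ι s ≠ ι t) → y t = z 0)
    (hyprev : ∀ s t, s < t → ι s = ι t → (∀ u, s < u → u < t → ι u ≠ ι t) →
        y t = z (s + 1))
    (hg2 : ∀ t, MemLp (g t) 2 μ)
    (hgmeas : ∀ t, StronglyMeasurable[ℱ (t + 1)] (g t))
    (hymeas : ∀ t, StronglyMeasurable[ℱ t] (y t))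
    (hzmeas : ∀ t, StronglyMeasurable[ℱ t] (z t))
    (σ : ℝ)
    (hUG : ∀ t, μ[g t | ℱ t] =ᵐ[μ] fun ω => gradient (Floc (ι t)) (y t ω))
    (hBV : ∀ t, μ[(fun ω => ‖g t ω - gradient (Floc (ι t)) (y t ω)‖ ^ 2) | ℱ t]
        ≤ᵐ[μ] fun _ => σ ^ 2)
    (L : ℝ)
    (hL : ∀ x x', ‖gradient F x - gradient F x'‖ ≤ L * ‖x - x'‖)
    (Li : Fin n → ℝ)
    (hLi : ∀ i x x', ‖gradient (Floc i) x - gradient (Floc i) x'‖ ≤ Li i * ‖x - x'‖)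
    (Lmax : ℝ) (hLmax : IsGreatest (Set.range Li) Lmax)
    (ζ ρ : ℝ) (hζ : 0 ≤ ζ) (hρ : 0 ≤ ρ)
    (hhet : ∀ i x, ‖gradient (Floc i) x‖ ^ 2 ≤ ζ ^ 2 + ρ ^ 2 * ‖gradient F x‖ ^ 2)
    (hγmax : ∀ i, 2 * (K : ℝ) * L * ρ * γ i ≤ 1)
    (M : ℕ) :
    ∑ m ∈ Finset.range M, ∫ ω, ‖∑ k ∈ Finset.range K,
        γ (ι k) • (gradient (Floc (ι k)) (y (m * K + k) ω) -
          gradient (Floc (ι k)) (z (m * K) ω))‖ ^ 2 ∂μ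
      ≤ 2 * (∑ k ∈ Finset.range K, γ (ι k) ^ 2) ^ 2 * (K : ℝ) ^ 2 * Lmax ^ 2 * M *
          (σ ^ 2 + ζ ^ 2)
        + 4 * (∑ k ∈ Finset.range K, γ (ι k) ^ 2) ^ 2 * (K : ℝ) ^ 2 * Lmax ^ 2 * ρ ^ 2 *
            ∑ m ∈ Finset.range M, ∫ ω, ‖gradient F (z (m * K) ω)‖ ^ 2 ∂μ :=
  cycle_bias_lemma_general μ Floc F K ι hιper γ hγpos ℱ hℱle g y z x0 hz0 hzrec hy0 hyprev hg2
    hymeas σ hUG hBV L hL Li hLi Lmax hLmax ζ ρ hρ hhet hγmax M
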